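/- Let (Γ,⊑) be an extended modular complex. If (p,a,b) and (a,b,q) are shortest subpaths and p ⊑ q, then a ⊑ b. -/

import Mathlib

/-!
Induct on `d(p,a) + d(b,q)`. If `(q,p,a)` is not a shortest subpath, a median `m` of `p, a, q`
lies in `I(p,q) = [p,q]`, so `m ⊑ q` by (i), and `m` replaces `p`; symmetrically for `q`. What
remains is the case of an isometric rectangle `(a,b,q,p)`: there we step from `p` towards `a`, to
`p'`, and from `q` towards `b`, to `t`, so that `(p',p,q,t)` is an isometric rectangle with unit
sides. Transporting admissibility along a directed path from `p` to `q` shows that `qt` is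
oriented like `pp'`, with `t = p' ∨ q` if `p → p'` and `p' = p ∧ t` if `p' → p`; so (ii), resp.
(iii), followed by (i) gives `p' ⊑ t`. As `(a,b,t,p')` is again an isometric rectangle, the pair
`(p',t)` continues the induction.
-/

namespace ZeroExt

variable {V : Type*}

/-- The metric interval `I(x,y)` in a graph. -/
def interval (G : SimpleGraph V) (x y : V) : Set V :=
  {z | G.dist x z + G.dist z y = G.dist x y}

/-- `m` is a median of `x, y, z`. -/
def IsMedian (G : SimpleGraph V) (x y z m : V) : Prop :=
  m ∈ interval G x y ∧ m ∈ interval G y z ∧ m ∈ interval G x z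

/-- A graph is modular if every triple of vertices has a median. -/
def Modular (G : SimpleGraph V) : Prop :=
  ∀ x y z : V, ∃ m : V, IsMedian G x y z m

/-- `(a,b,c)` is a shortest subpath. -/
def ShortestTriple (G : SimpleGraph V) (a b c : V) : Prop :=
  G.dist a b + G.dist b c = G.dist a c

/-- `(a,b,c,d)` is a shortest subpath. -/
def ShortestQuad (G : SimpleGraph V) (a b c d : V) : Prop :=
  G.dist a b + G.dist b c + G.dist c d = G.dist a d

/-- `(x1,x2,x3,x4)` is an isometric rectangle. -/
def IsoRect (G : SimpleGraph V) (x1 x2 x3 x4 : V) : Prop :=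
  ShortestTriple G x4 x1 x2 ∧ ShortestTriple G x1 x2 x3 ∧
    ShortestTriple G x2 x3 x4 ∧ ShortestTriple G x3 x4 x1

/-- A set of vertices is convex if it contains the interval of each pair of its points. -/
def Convex (G : SimpleGraph V) (U : Set V) : Prop :=
  ∀ x ∈ U, ∀ y ∈ U, interval G x y ⊆ U

/-- `g` is a gate of `q` at `U`. -/
def IsGate (G : SimpleGraph V) (U : Set V) (q g : V) : Prop :=
  g ∈ U ∧ ∀ u ∈ U, G.dist q u = G.dist q g + G.dist g u

/-- A 4-cycle in a graph. -/
def IsFourCycle (G : SimpleGraph V) (x1 x2 x3 x4 : V) : Prop :=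
  G.Adj x1 x2 ∧ G.Adj x2 x3 ∧ G.Adj x3 x4 ∧ G.Adj x4 x1 ∧ x1 ≠ x3 ∧ x2 ≠ x4

/-- A modular complex: a finite connected modular graph together with an
acyclic admissible edge orientation. -/
structure ModularComplex (V : Type*) [Fintype V] where
  G : SimpleGraph V
  connected : G.Connected
  modular : Modular G
  ori : V → V → Prop
  ori_adj : ∀ {x y : V}, ori x y → G.Adj x y
  ori_total : ∀ {x y : V}, G.Adj x y → ori x y ∨ ori y x
  acyclic : ∀ {x y : V}, Relation.ReflTransGen ori x y → Relation.ReflTransGen ori y x → x = y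
  admissible : ∀ {x1 x2 x3 x4 : V}, IsFourCycle G x1 x2 x3 x4 → ori x1 x2 → ori x4 x3

variable [Fintype V]

/-- The partial order `⪯` induced by the orientation. -/
def ModularComplex.le (Γ : ModularComplex V) : V → V → Prop :=
  Relation.ReflTransGen Γ.ori

/-- The order interval `[p,q]`. -/
def ModularComplex.Icc (Γ : ModularComplex V) (p q : V) : Set V :=
  {x | Γ.le p x ∧ Γ.le x q}

/-- `m` is the greatest lower bound `p ∧ q`. -/
def ModularComplex.IsMeet (Γ : ModularComplex V) (p q m : V) : Prop :=
  Γ.le m p ∧ Γ.le m q ∧ ∀ x : V, Γ.le x p → Γ.le x q → Γ.le x m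

/-- `j` is the least upper bound `p ∨ q`. -/
def ModularComplex.IsJoin (Γ : ModularComplex V) (p q j : V) : Prop :=
  Γ.le p j ∧ Γ.le q j ∧ ∀ x : V, Γ.le p x → Γ.le q x → Γ.le j x

/-- `(p,q)` is a Boolean pair. -/
def ModularComplex.BooleanPair (Γ : ModularComplex V) (p q : V) : Prop :=
  ∃ (k : ℕ) (φ : Finset (Fin k) → V), Function.Injective φ ∧
    φ ∅ = p ∧ φ Finset.univ = q ∧
    ∀ (S : Finset (Fin k)) (i : Fin k), i ∉ S → Γ.ori (φ S) (φ (insert i S))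

/-- An extended modular complex: a modular complex with an admissible relation `⊑`. -/
structure ExtendedModularComplex (V : Type*) [Fintype V] extends ModularComplex V where
  sq : V → V → Prop
  sq_le : ∀ {p q : V}, sq p q → toModularComplex.le p q
  sq_refl : ∀ p : V, sq p p
  sq_edge : ∀ {p q : V}, ori p q → sq p q
  sq_interval : ∀ {p q a b : V}, sq p q → toModularComplex.le a b →
    a ∈ toModularComplex.Icc p q → b ∈ toModularComplex.Icc p q → sq a b
  sq_join : ∀ {p q1 q2 j : V}, sq p q1 → sq p q2 → toModularComplex.IsJoin q1 q2 j → sq p j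
  sq_meet : ∀ {p1 p2 q m : V}, sq p1 q → sq p2 q → toModularComplex.IsMeet p1 p2 m → sq m q

/-- `L^+_p = {x : p ⊑ x}`. -/
def ExtendedModularComplex.Lpos (Γ : ExtendedModularComplex V) (p : V) : Set V :=
  {x | Γ.sq p x}

/-- `L^-_p = {x : x ⊑ p}`. -/
def ExtendedModularComplex.Lneg (Γ : ExtendedModularComplex V) (p : V) : Set V :=
  {x | Γ.sq x p}

/-- `p, q` are ◇-neighbors. -/
def ExtendedModularComplex.DiamondNb (Γ : ExtendedModularComplex V) (p q : V) : Prop :=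
  ∃ a b : V, Γ.sq a b ∧ p ∈ Γ.Icc a b ∧ q ∈ Γ.Icc a b

/-- The thickening `Δ(Γ)`. -/
def ExtendedModularComplex.thick (Γ : ExtendedModularComplex V) : SimpleGraph V where
  Adj p q := p ≠ q ∧ Γ.DiamondNb p q
  symm := by
    refine ⟨?_⟩
    rintro p q ⟨hne, a, b, hab, hp, hq⟩
    exact ⟨hne.symm, a, b, hab, hq, hp⟩
  loopless := by refine ⟨?_⟩; rintro p ⟨hne, -⟩; exact hne rfl


section Metric

omit [Fintype V]

variable {G : SimpleGraph V}

theorem Modular.exists_median (hM : Modular G) (x y z : V) :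
    ∃ m, G.dist x m + G.dist m y = G.dist x y ∧ G.dist y m + G.dist m z = G.dist y z ∧
      G.dist x m + G.dist m z = G.dist x z :=
  hM x y z

/-- Modular graphs are bipartite. -/
theorem Modular.dist_eq_add_one_or_of_adj (hM : Modular G) (hG : G.Connected) {x y : V}
    (hxy : G.Adj x y) (z : V) :
    G.dist z y = G.dist z x + 1 ∨ G.dist z x = G.dist z y + 1 := by
  obtain ⟨m, hm, hym, hxm⟩ := hM.exists_median x y z
  rw [SimpleGraph.dist_eq_one_iff_adj.mpr hxy] at hm
  have hyx := SimpleGraph.dist_eq_one_iff_adj.mpr hxy.symm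
  rw [SimpleGraph.dist_comm (u := z), SimpleGraph.dist_comm (u := z)]
  rcases (show G.dist x m = 0 ∨ G.dist m y = 0 by omega) with h | h
  · obtain rfl := hG.dist_eq_zero_iff.mp h
    omega
  · obtain rfl := hG.dist_eq_zero_iff.mp h
    omega

/-- The quadrangle condition. -/
theorem Modular.exists_adj_adj_of_dist_eq (hM : Modular G) (hG : G.Connected) {c x y z : V}
    (hcx : G.Adj c x) (hcy : G.Adj c y) (hxy : x ≠ y)
    (hxz : G.dist x z + 1 = G.dist c z) (hyz : G.dist y z + 1 = G.dist c z) :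
    ∃ t, G.Adj x t ∧ G.Adj y t ∧ G.dist t z + 1 = G.dist x z := by
  have hzx : G.dist z x = G.dist x z := SimpleGraph.dist_comm
  have hzy : G.dist z y = G.dist y z := SimpleGraph.dist_comm
  have hnadj : ¬ G.Adj x y := fun h => by
    rcases hM.dist_eq_add_one_or_of_adj hG h z with h' | h' <;> omega
  have hxc : G.dist x c = 1 := SimpleGraph.dist_eq_one_iff_adj.mpr hcx.symm
  have hcy' : G.dist c y = 1 := SimpleGraph.dist_eq_one_iff_adj.mpr hcy
  have hdxy : G.dist x y = 2 := by
    have := hG.one_lt_dist_of_ne_of_not_adj hxy hnadj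
    have := hG.dist_triangle (u := x) (v := c) (w := y)
    omega
  obtain ⟨t, hxty, hytz, hxtz⟩ := hM.exists_median x y z
  have hty : G.dist t y = G.dist y t := SimpleGraph.dist_comm
  refine ⟨t, SimpleGraph.dist_eq_one_iff_adj.mp ?_, SimpleGraph.dist_eq_one_iff_adj.mp ?_, ?_⟩ <;>
    omega

theorem exists_adj_dist_add_one_eq {x y : V} (h : G.dist x y ≠ 0) :
    ∃ u, G.Adj x u ∧ G.dist u y + 1 = G.dist x y := by
  obtain ⟨w, hw⟩ := SimpleGraph.exists_walk_of_dist_ne_zero h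
  cases w with
  | nil => exact absurd SimpleGraph.dist_self h
  | @cons _ u _ hxu w =>
    refine ⟨u, hxu, le_antisymm ?_ ?_⟩
    · have := SimpleGraph.dist_le w
      simp only [SimpleGraph.Walk.length_cons] at hw
      omega
    · obtain ⟨w', hw'⟩ := w.reachable.exists_walk_length_eq_dist
      simpa [hw'] using SimpleGraph.dist_le (w'.cons hxu)

theorem ShortestTriple.left_of_mem_interval (hG : G.Connected) {p a b m : V}
    (h : ShortestTriple G p a b) (hm : m ∈ interval G p a) : ShortestTriple G m a b := by
  have hm' : G.dist p m + G.dist m a = G.dist p a := hm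
  have := hG.dist_triangle (u := m) (v := a) (w := b)
  have := hG.dist_triangle (u := p) (v := m) (w := b)
  unfold ShortestTriple at h ⊢
  omega

theorem ShortestTriple.right_of_mem_interval (hG : G.Connected) {a b q n : V}
    (h : ShortestTriple G a b q) (hn : n ∈ interval G b q) : ShortestTriple G a b n := by
  have hn' : G.dist b n + G.dist n q = G.dist b q := hn
  have := hG.dist_triangle (u := a) (v := b) (w := n)
  have := hG.dist_triangle (u := a) (v := n) (w := q)
  unfold ShortestTriple at h ⊢
  omega

theorem IsoRect.dist_eq {x₁ x₂ x₃ x₄ : V} (h : IsoRect G x₁ x₂ x₃ x₄) :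
    G.dist x₁ x₂ = G.dist x₃ x₄ ∧ G.dist x₂ x₃ = G.dist x₄ x₁ := by
  obtain ⟨h₁, h₂, h₃, h₄⟩ := h
  unfold ShortestTriple at *
  rw [SimpleGraph.dist_comm (u := x₄) (v := x₂)] at h₁
  rw [SimpleGraph.dist_comm (u := x₃) (v := x₁)] at h₄
  omega

theorem IsoRect.exists_isoRect_isoRect (hM : Modular G) (hG : G.Connected) {a b q p : V}
    (hR : IsoRect G a b q p) (hpa : p ≠ a) :
    ∃ p' t, G.Adj p p' ∧ G.Adj q t ∧ IsoRect G p' p q t ∧ IsoRect G a b t p' ∧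
      G.dist p' a < G.dist p a := by
  obtain ⟨hab, hbq⟩ := hR.dist_eq
  obtain ⟨h₁, h₂, h₃, h₄⟩ := hR
  unfold ShortestTriple at h₁ h₂ h₃ h₄
  obtain ⟨p', hpp', hp'a⟩ := exists_adj_dist_add_one_eq (hG.pos_dist_of_ne hpa).ne'
  have hpp'1 : G.dist p p' = 1 := SimpleGraph.dist_eq_one_iff_adj.mpr hpp'
  have c₁ : G.dist q p = G.dist p q := SimpleGraph.dist_comm
  have c₂ : G.dist p' p = G.dist p p' := SimpleGraph.dist_comm
  have c₃ : G.dist q p' = G.dist p' q := SimpleGraph.dist_comm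
  have hp'b : G.dist p' b = G.dist p' a + G.dist a b := by
    have := hG.dist_triangle (u := p') (v := a) (w := b)
    have := hG.dist_triangle (u := p) (v := p') (w := b)
    omega
  have hp'q : G.dist p' q = G.dist p q + 1 := by
    have := hG.dist_triangle (u := p') (v := p) (w := q)
    have := hG.dist_triangle (u := q) (v := p') (w := a)
    omega
  obtain ⟨t, hp'tb, hbtq, hp'tq⟩ := hM.exists_median p' b q
  have c₄ : G.dist t b = G.dist b t := SimpleGraph.dist_comm
  have hqt : G.dist q t = 1 := by
    rw [SimpleGraph.dist_comm]
    omega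
  have hpt : G.dist p t = G.dist p q + 1 := by
    have := hG.dist_triangle (u := p) (v := t) (w := b)
    have := hG.dist_triangle (u := p) (v := q) (w := t)
    have : G.dist b p = G.dist p b := SimpleGraph.dist_comm
    omega
  have hat : G.dist a t = G.dist a b + G.dist b t := by
    have := hG.dist_triangle (u := a) (v := t) (w := q)
    have := hG.dist_triangle (u := a) (v := b) (w := t)
    omega
  have c₅ : G.dist t p' = G.dist p' t := SimpleGraph.dist_comm
  have c₆ : G.dist t p = G.dist p t := SimpleGraph.dist_comm
  have c₇ : G.dist t a = G.dist a t := SimpleGraph.dist_comm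
  have c₈ : G.dist b p' = G.dist p' b := SimpleGraph.dist_comm
  refine ⟨p', t, hpp', SimpleGraph.dist_eq_one_iff_adj.mp hqt, ⟨?_, ?_, ?_, ?_⟩, ⟨?_, ?_, ?_, ?_⟩,
    by omega⟩ <;> unfold ShortestTriple <;> omega

end Metric

namespace ModularComplex

variable (Γ : ModularComplex V)

theorem not_ori_of_ori {x y : V} (h : Γ.ori x y) : ¬ Γ.ori y x := fun h' =>
  (Γ.ori_adj h).ne (Γ.acyclic (.single h) (.single h'))

theorem ori_of_adj_of_le {x y : V} (hxy : Γ.G.Adj x y) (hle : Γ.le x y) : Γ.ori x y :=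
  (Γ.ori_total hxy).resolve_right fun h => hxy.ne (Γ.acyclic hle (.single h))

theorem dist_eq_add_one_of_le_of_ori {z x : V} (hzx : Γ.le z x) :
    ∀ {y : V}, Γ.ori x y → Γ.G.dist z y = Γ.G.dist z x + 1 := by
  induction hzx with
  | refl =>
    intro y h
    rw [SimpleGraph.dist_self, SimpleGraph.dist_eq_one_iff_adj.mpr (Γ.ori_adj h)]
  | @tail b c _ hbc ih =>
    intro y hcy
    have hzc := ih hbc
    refine (Γ.modular.dist_eq_add_one_or_of_adj Γ.connected (Γ.ori_adj hcy) z).resolve_right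
      fun hzy => ?_
    have hyb : y ≠ b := fun hyb => Γ.not_ori_of_ori hbc (hyb ▸ hcy)
    have hyz : Γ.G.dist z y = Γ.G.dist y z := SimpleGraph.dist_comm
    have hbz : Γ.G.dist z b = Γ.G.dist b z := SimpleGraph.dist_comm
    have hcz : Γ.G.dist z c = Γ.G.dist c z := SimpleGraph.dist_comm
    obtain ⟨t, hyt, hbt, htz⟩ := Γ.modular.exists_adj_adj_of_dist_eq Γ.connected (z := z)
      (Γ.ori_adj hcy) (Γ.ori_adj hbc).symm hyb (by omega) (by omega)
    have hct : c ≠ t := by rintro rfl; omega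
    have hbt' : Γ.ori b t :=
      Γ.admissible ⟨Γ.ori_adj hcy, hyt, hbt.symm, Γ.ori_adj hbc, hct, hyb⟩ hcy
    have htz' : Γ.G.dist z t = Γ.G.dist t z := SimpleGraph.dist_comm
    have := ih hbt'
    omega

theorem dist_eq_add_of_le_of_le {x y z : V} (hxy : Γ.le x y) (hyz : Γ.le y z) :
    Γ.G.dist x z = Γ.G.dist x y + Γ.G.dist y z := by
  induction hyz with
  | refl => rw [SimpleGraph.dist_self, add_zero]
  | @tail b c hyb hbc ih =>
    rw [Γ.dist_eq_add_one_of_le_of_ori (hxy.trans hyb) hbc, Γ.dist_eq_add_one_of_le_of_ori hyb hbc,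
      ih, add_assoc]

/-- A geodesic from `p` to `q ⪰ p` starts with an edge leaving `p`. -/
theorem ori_and_le_of_adj_of_dist_add_one_eq {p q : V} (hpq : Γ.le p q) :
    ∀ {u : V}, Γ.G.Adj p u → Γ.G.dist u q + 1 = Γ.G.dist p q → Γ.ori p u ∧ Γ.le u q := by
  induction hpq using Relation.ReflTransGen.head_induction_on with
  | refl => intro u _ hu; rw [SimpleGraph.dist_self] at hu; omega
  | @head p v hpv hvq ih =>
    intro u hpu hu
    by_cases huv : u = v
    · subst huv
      exact ⟨hpv, hvq⟩
    have hpv' : Γ.G.dist p q = 1 + Γ.G.dist v q := by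
      rw [Γ.dist_eq_add_of_le_of_le (.single hpv) hvq,
        SimpleGraph.dist_eq_one_iff_adj.mpr (Γ.ori_adj hpv)]
    obtain ⟨t, hut, hvt, htq⟩ := Γ.modular.exists_adj_adj_of_dist_eq Γ.connected
      hpu (Γ.ori_adj hpv) huv hu (by omega)
    have hpt : p ≠ t := by rintro rfl; omega
    obtain ⟨hvt', htq'⟩ := ih hvt (by omega)
    exact ⟨Γ.admissible ⟨hvt, hut.symm, hpu.symm, Γ.ori_adj hpv, Ne.symm huv, hpt.symm⟩ hvt',
      .head (Γ.admissible ⟨Γ.ori_adj hpv, hvt, hut.symm, hpu.symm, hpt, Ne.symm huv⟩ hpv) htq'⟩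

theorem mem_Icc_of_mem_interval {p q x : V} (hpq : Γ.le p q) (hx : x ∈ interval Γ.G p q) :
    x ∈ Γ.Icc p q := by
  induction hk : Γ.G.dist p x generalizing p with
  | zero =>
    obtain rfl := Γ.connected.dist_eq_zero_iff.mp hk
    exact ⟨.refl, hpq⟩
  | succ k ih =>
    obtain ⟨u, hpu, hux⟩ := exists_adj_dist_add_one_eq (G := Γ.G) (by omega : Γ.G.dist p x ≠ 0)
    have hx' : Γ.G.dist p x + Γ.G.dist x q = Γ.G.dist p q := hx
    have := Γ.connected.dist_triangle (u := u) (v := x) (w := q)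
    have := Γ.connected.dist_triangle (u := p) (v := u) (w := q)
    rw [SimpleGraph.dist_eq_one_iff_adj.mpr hpu] at this
    obtain ⟨hpu', huq⟩ := Γ.ori_and_le_of_adj_of_dist_add_one_eq hpq hpu (by omega)
    obtain ⟨hux', hxq⟩ := ih huq (show _ = _ by omega) (by omega)
    exact ⟨.head hpu' hux', hxq⟩

theorem isJoin_of_ori_of_ori {a n b : V} (hab : Γ.ori a b) (hnb : Γ.ori n b) (hne : a ≠ n) :
    Γ.IsJoin a n b := by
  refine ⟨.single hab, .single hnb, fun z haz hnz => ?_⟩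
  by_contra hbz
  have hcloser : ∀ x, Γ.ori x b → Γ.le x z → Γ.G.dist x z + 1 = Γ.G.dist b z := by
    intro x hxb hxz
    have hzx : Γ.G.dist z x = Γ.G.dist x z := SimpleGraph.dist_comm
    have hzb : Γ.G.dist z b = Γ.G.dist b z := SimpleGraph.dist_comm
    refine (Γ.modular.dist_eq_add_one_or_of_adj Γ.connected (Γ.ori_adj hxb) z).elim
      (fun h => by omega) fun h => absurd (Γ.mem_Icc_of_mem_interval hxz ?_).2 hbz
    change Γ.G.dist x b + Γ.G.dist b z = Γ.G.dist x z
    rw [SimpleGraph.dist_eq_one_iff_adj.mpr (Γ.ori_adj hxb)]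
    omega
  obtain ⟨g, hag, hng, hgz⟩ := Γ.modular.exists_adj_adj_of_dist_eq Γ.connected
    (Γ.ori_adj hab).symm (Γ.ori_adj hnb).symm hne (hcloser a hab haz) (hcloser n hnb hnz)
  have hbg : b ≠ g := by rintro rfl; have := hcloser a hab haz; omega
  have hag' : Γ.ori a g := Γ.ori_of_adj_of_le hag (Γ.mem_Icc_of_mem_interval haz (by
    change Γ.G.dist a g + Γ.G.dist g z = Γ.G.dist a z
    rw [SimpleGraph.dist_eq_one_iff_adj.mpr hag]
    omega)).1
  exact Γ.not_ori_of_ori hag'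
    (Γ.admissible ⟨Γ.ori_adj hnb, (Γ.ori_adj hab).symm, hag, hng.symm, hne.symm, hbg⟩ hnb)

def dual : ModularComplex V where
  G := Γ.G
  connected := Γ.connected
  modular := Γ.modular
  ori x y := Γ.ori y x
  ori_adj h := (Γ.ori_adj h).symm
  ori_total h := Γ.ori_total h.symm
  acyclic h₁ h₂ :=
    Γ.acyclic (Relation.reflTransGen_swap.mp h₂) (Relation.reflTransGen_swap.mp h₁)
  admissible := fun ⟨h₁₂, h₂₃, h₃₄, h₄₁, h₁₃, h₂₄⟩ h =>
    Γ.admissible ⟨h₁₂.symm, h₄₁.symm, h₃₄.symm, h₂₃.symm, h₂₄, h₁₃⟩ h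

theorem dual_le {x y : V} : Γ.dual.le x y ↔ Γ.le y x := Relation.reflTransGen_swap

theorem dual_isJoin {a b c : V} : Γ.dual.IsJoin a b c ↔ Γ.IsMeet a b c := by
  simp only [IsJoin, IsMeet, dual_le]

theorem isMeet_of_ori_of_ori {a n b : V} (hba : Γ.ori b a) (hbn : Γ.ori b n) (hne : a ≠ n) :
    Γ.IsMeet a n b :=
  Γ.dual_isJoin.mp (Γ.dual.isJoin_of_ori_of_ori hba hbn hne)

theorem isJoin_of_isJoin_of_le {a w x q b : V} (hx : Γ.IsJoin a w x) (hb : Γ.IsJoin x q b)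
    (hwq : Γ.le w q) : Γ.IsJoin a q b :=
  ⟨hx.1.trans hb.1, hb.2.1, fun z haz hqz => hb.2.2 z (hx.2.2 z haz (hwq.trans hqz)) hqz⟩

theorem isMeet_of_isMeet_of_le {p x a w b : V} (ha : Γ.IsMeet p x a) (hx : Γ.IsMeet w b x)
    (hpw : Γ.le p w) : Γ.IsMeet p b a :=
  ⟨ha.1, ha.2.1.trans hx.2.1, fun z hzp hzb => ha.2.2 z hzp (hx.2.2 z (hzp.trans hpw) hzb)⟩

theorem exists_isFourCycle_isoRect {p w q p' q' : V} (hpw : Γ.ori p w) (hwq : Γ.le w q)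
    (hpp' : Γ.G.Adj p p') (hqq' : Γ.G.Adj q q') (hR : IsoRect Γ.G p' p q q') :
    ∃ x, IsFourCycle Γ.G p w x p' ∧ IsoRect Γ.G x w q q' := by
  obtain ⟨h₁, h₂, h₃, h₄⟩ := hR
  unfold ShortestTriple at h₁ h₂ h₃ h₄
  have hG := Γ.connected
  have e₁ : Γ.G.dist p' p = 1 := SimpleGraph.dist_eq_one_iff_adj.mpr hpp'.symm
  have e₂ : Γ.G.dist q q' = 1 := SimpleGraph.dist_eq_one_iff_adj.mpr hqq'
  have e₃ : Γ.G.dist p w = 1 := SimpleGraph.dist_eq_one_iff_adj.mpr (Γ.ori_adj hpw)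
  have hpq := Γ.dist_eq_add_of_le_of_le (.single hpw) hwq
  have c₁ : Γ.G.dist q' p' = Γ.G.dist p' q' := SimpleGraph.dist_comm
  have c₂ : Γ.G.dist q p' = Γ.G.dist p' q := SimpleGraph.dist_comm
  have c₃ : Γ.G.dist q' p = Γ.G.dist p q' := SimpleGraph.dist_comm
  have t₁ := hG.dist_triangle (u := p') (v := w) (w := q)
  have t₂ := hG.dist_triangle (u := p') (v := p) (w := w)
  have t₃ := hG.dist_triangle (u := p) (v := w) (w := q')
  have t₄ := hG.dist_triangle (u := w) (v := q) (w := q')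
  obtain ⟨x, hwxp', hp'xq', hwxq'⟩ := Γ.modular.exists_median w p' q'
  have c₄ : Γ.G.dist x p' = Γ.G.dist p' x := SimpleGraph.dist_comm
  have c₅ : Γ.G.dist q' x = Γ.G.dist x q' := SimpleGraph.dist_comm
  have c₆ : Γ.G.dist x w = Γ.G.dist w x := SimpleGraph.dist_comm
  have c₇ : Γ.G.dist q' w = Γ.G.dist w q' := SimpleGraph.dist_comm
  have c₈ : Γ.G.dist q x = Γ.G.dist x q := SimpleGraph.dist_comm
  have c₉ : Γ.G.dist w p' = Γ.G.dist p' w := SimpleGraph.dist_comm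
  have t₅ := hG.dist_triangle (u := p') (v := x) (w := q)
  have t₆ := hG.dist_triangle (u := x) (v := w) (w := q)
  have hwx : Γ.G.dist w x = 1 := by omega
  have hxp' : Γ.G.dist x p' = 1 := by omega
  have hpx : p ≠ x := by rintro rfl; omega
  have hwp' : w ≠ p' := by rintro rfl; omega
  refine ⟨x, ⟨Γ.ori_adj hpw, SimpleGraph.dist_eq_one_iff_adj.mp hwx,
    SimpleGraph.dist_eq_one_iff_adj.mp hxp', hpp'.symm, hpx, hwp'⟩, ?_, ?_, ?_, ?_⟩ <;>
    unfold ShortestTriple <;> omega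

theorem ori_and_isJoin_of_isoRect {p q : V} (hpq : Γ.le p q) :
    ∀ {p' q' : V}, Γ.G.Adj p p' → Γ.G.Adj q q' → IsoRect Γ.G p' p q q' → Γ.ori p p' →
      Γ.ori q q' ∧ Γ.IsJoin p' q q' := by
  induction hpq using Relation.ReflTransGen.head_induction_on with
  | refl =>
    intro p' q' _ _ hR hqp'
    obtain rfl : q' = p' :=
      Γ.connected.dist_eq_zero_iff.mp (hR.dist_eq.2.symm.trans SimpleGraph.dist_self)
    exact ⟨hqp', .refl, .single hqp', fun _ h _ => h⟩
  | @head p w hpw hwq ih =>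
    intro p' q' hpp' hqq' hR hpp'o
    obtain ⟨x, hC, hR'⟩ := Γ.exists_isFourCycle_isoRect hpw hwq hpp' hqq' hR
    have hp'x : Γ.ori p' x := Γ.admissible hC hpw
    obtain ⟨-, hwx, hxp', -, hpx, hwp'⟩ := hC
    have hwxo : Γ.ori w x :=
      Γ.admissible ⟨hpp', hxp'.symm, hwx.symm, (Γ.ori_adj hpw).symm, hpx, hwp'.symm⟩ hpp'o
    obtain ⟨hqq'o, hJ⟩ := ih hwx hqq' hR' hwxo
    exact ⟨hqq'o, Γ.isJoin_of_isJoin_of_le (Γ.isJoin_of_ori_of_ori hp'x hwxo hwp'.symm) hJ hwq⟩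

theorem ori_and_isMeet_of_isoRect {p q : V} (hpq : Γ.le p q) :
    ∀ {p' q' : V}, Γ.G.Adj p p' → Γ.G.Adj q q' → IsoRect Γ.G p' p q q' → Γ.ori p' p →
      Γ.ori q' q ∧ Γ.IsMeet p q' p' := by
  induction hpq using Relation.ReflTransGen.head_induction_on with
  | refl =>
    intro p' q' _ _ hR hp'q
    obtain rfl : q' = p' :=
      Γ.connected.dist_eq_zero_iff.mp (hR.dist_eq.2.symm.trans SimpleGraph.dist_self)
    exact ⟨hp'q, .single hp'q, .refl, fun _ _ h => h⟩
  | @head p w hpw hwq ih =>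
    intro p' q' hpp' hqq' hR hp'po
    obtain ⟨x, hC, hR'⟩ := Γ.exists_isFourCycle_isoRect hpw hwq hpp' hqq' hR
    have hp'x : Γ.ori p' x := Γ.admissible hC hpw
    obtain ⟨-, hwx, hxp', -, hpx, hwp'⟩ := hC
    have hxwo : Γ.ori x w :=
      Γ.admissible ⟨hpp'.symm, Γ.ori_adj hpw, hwx, hxp', hwp'.symm, hpx⟩ hp'po
    obtain ⟨hq'qo, hM⟩ := ih hwx hqq' hR' hxwo
    exact ⟨hq'qo, Γ.isMeet_of_isMeet_of_le (Γ.isMeet_of_ori_of_ori hp'po hp'x hpx) hM (.single hpw)⟩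

end ModularComplex

namespace ExtendedModularComplex

variable (Γ : ExtendedModularComplex V)

theorem sq_of_le_of_le {p q x y : V} (hpq : Γ.sq p q) (hpx : Γ.le p x) (hxy : Γ.le x y)
    (hyq : Γ.le y q) : Γ.sq x y :=
  Γ.sq_interval hpq hxy ⟨hpx, hxy.trans hyq⟩ ⟨hpx.trans hxy, hyq⟩

theorem sq_of_isoRect {p q p' q' : V} (hpq : Γ.sq p q) (hpp' : Γ.G.Adj p p')
    (hqq' : Γ.G.Adj q q') (hR : IsoRect Γ.G p' p q q') : Γ.sq p' q' := by
  rcases Γ.ori_total hpp' with h | h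
  · have hJ := (Γ.ori_and_isJoin_of_isoRect (Γ.sq_le hpq) hpp' hqq' hR h).2
    exact Γ.sq_of_le_of_le (Γ.sq_join (Γ.sq_edge h) hpq hJ) (.single h) hJ.1 .refl
  · obtain ⟨hq'q, hM⟩ := Γ.ori_and_isMeet_of_isoRect (Γ.sq_le hpq) hpp' hqq' hR h
    exact Γ.sq_of_le_of_le (Γ.sq_meet hpq (Γ.sq_edge hq'q) hM) .refl hM.2.1 (.single hq'q)

theorem exists_sq_left {p q a b : V} (hpq : Γ.sq p q) (h : ShortestTriple Γ.G p a b)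
    (hqpa : ¬ ShortestTriple Γ.G q p a) :
    ∃ m, Γ.sq m q ∧ ShortestTriple Γ.G m a b ∧ Γ.G.dist m a < Γ.G.dist p a := by
  obtain ⟨m, hpma, hamq, hpmq⟩ := Γ.modular.exists_median p a q
  obtain ⟨hpm, hmq⟩ := Γ.mem_Icc_of_mem_interval (Γ.sq_le hpq) hpmq
  refine ⟨m, Γ.sq_of_le_of_le hpq hpm hmq .refl, h.left_of_mem_interval Γ.connected hpma, ?_⟩
  have hne : p ≠ m := by
    rintro rfl
    have : Γ.G.dist q p = Γ.G.dist p q := SimpleGraph.dist_comm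
    have : Γ.G.dist p a = Γ.G.dist a p := SimpleGraph.dist_comm
    have : Γ.G.dist q a = Γ.G.dist a q := SimpleGraph.dist_comm
    exact hqpa (by unfold ShortestTriple; omega)
  have := Γ.connected.pos_dist_of_ne hne
  omega

theorem exists_sq_right {p q a b : V} (hpq : Γ.sq p q) (h : ShortestTriple Γ.G a b q)
    (hbqp : ¬ ShortestTriple Γ.G b q p) :
    ∃ n, Γ.sq p n ∧ ShortestTriple Γ.G a b n ∧ Γ.G.dist b n < Γ.G.dist b q := by
  obtain ⟨n, hpnb, hbnq, hpnq⟩ := Γ.modular.exists_median p b q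
  obtain ⟨hpn, hnq⟩ := Γ.mem_Icc_of_mem_interval (Γ.sq_le hpq) hpnq
  refine ⟨n, Γ.sq_of_le_of_le hpq .refl hpn hnq, h.right_of_mem_interval Γ.connected hbnq, ?_⟩
  have hne : n ≠ q := by
    rintro rfl
    have : Γ.G.dist n p = Γ.G.dist p n := SimpleGraph.dist_comm
    have : Γ.G.dist n b = Γ.G.dist b n := SimpleGraph.dist_comm
    have : Γ.G.dist b p = Γ.G.dist p b := SimpleGraph.dist_comm
    exact hbqp (by unfold ShortestTriple; omega)
  have := Γ.connected.pos_dist_of_ne hne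
  omega

theorem exists_sq_of_isoRect {p q a b : V} (hpq : Γ.sq p q) (hR : IsoRect Γ.G a b q p)
    (hpa : p ≠ a) :
    ∃ p' q', Γ.sq p' q' ∧ ShortestTriple Γ.G p' a b ∧ ShortestTriple Γ.G a b q' ∧
      Γ.G.dist p' a + Γ.G.dist b q' < Γ.G.dist p a + Γ.G.dist b q := by
  obtain ⟨p', t, hpp', hqt, hR₁, hR₂, hlt⟩ := hR.exists_isoRect_isoRect Γ.modular Γ.connected hpa
  have := hR.dist_eq.2
  have := hR₂.dist_eq.2
  exact ⟨p', t, Γ.sq_of_isoRect hpq hpp' hqt hR₁, hR₂.1, hR₂.2.1, by omega⟩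

theorem exists_sq_closer {p q a b : V} (hpq : Γ.sq p q) (h₁ : ShortestTriple Γ.G p a b)
    (h₂ : ShortestTriple Γ.G a b q) (hne : p ≠ a ∨ q ≠ b) :
    ∃ p' q', Γ.sq p' q' ∧ ShortestTriple Γ.G p' a b ∧ ShortestTriple Γ.G a b q' ∧
      Γ.G.dist p' a + Γ.G.dist b q' < Γ.G.dist p a + Γ.G.dist b q := by
  by_cases h₄ : ¬ ShortestTriple Γ.G q p a
  · obtain ⟨m, hmq, h, hlt⟩ := Γ.exists_sq_left hpq h₁ h₄
    exact ⟨m, q, hmq, h, h₂, by omega⟩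
  by_cases h₃ : ¬ ShortestTriple Γ.G b q p
  · obtain ⟨n, hpn, h, hlt⟩ := Γ.exists_sq_right hpq h₂ h₃
    exact ⟨p, n, hpn, h₁, h, by omega⟩
  have hR : IsoRect Γ.G a b q p := ⟨h₁, h₂, of_not_not h₃, of_not_not h₄⟩
  refine Γ.exists_sq_of_isoRect hpq hR fun hpa => ?_
  subst hpa
  have hbq : Γ.G.dist b q = 0 := hR.dist_eq.2.trans SimpleGraph.dist_self
  exact hne.elim (· rfl) (· (Γ.connected.dist_eq_zero_iff.mp hbq).symm)

end ExtendedModularComplex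

/-- If `(p,a,b)` and `(a,b,q)` are shortest subpaths and `p ⊑ q`,
then `a ⊑ b`. -/
theorem sq_of_shortest_subpaths (Γ : ExtendedModularComplex V) (p q a b : V)
    (h1 : ShortestTriple Γ.G p a b) (h2 : ShortestTriple Γ.G a b q)
    (hpq : Γ.sq p q) : Γ.sq a b := by
  induction hN : Γ.G.dist p a + Γ.G.dist b q using Nat.strong_induction_on generalizing p q with
  | _ N ih =>
    by_cases hab : p = a ∧ q = b
    · obtain ⟨rfl, rfl⟩ := hab
      exact hpq
    obtain ⟨p', q', hp'q', h1', h2', hlt⟩ := Γ.exists_sq_closer hpq h1 h2 (not_and_or.mp hab)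
    exact ih _ (hN ▸ hlt) p' q' h1' h2' hp'q' rfl

end ZeroExt
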